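/- Let (G, μ) be a weighted graph, let p ∈ [1, ∞), let k ≥ 0, and let Ω_0, Ω_1, …, Ω_k ⊆ V be pairwise disjoint subsets such that each Ω_α \ ∂_v Ω_α is nonempty. Then ν^D_{k+1,p}(Ω_0 ⊔ Ω_1 ⊔ ⋯ ⊔ Ω_k, μ) ≤ max_{α = 0, …, k} ν^D_{1,p}(Ω_α, μ). -/

import Mathlib

/-!
Choose, on each `Ω α`, a function `f α` vanishing off `Ω α \ ∂ᵥΩ α` whose Rayleigh quotient is
within `ε` of `ν^D_{1,p}(Ω α)`. The `f α` have disjoint supports, so they span a `(k+1)`-dimensional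
space of admissible functions on `⋃ α, Ω α`. An edge joining two different pieces has both
endpoints on vertex boundaries, where every such combination vanishes; hence numerator and
denominator of the Rayleigh quotient of `∑ α, c α • f α` split as `∑ α, |c α| ^ p * (…)`,
and its quotient is at most `max_α ν^D_{1,p}(Ω α) + ε`.
-/

open scoped BigOperators Classical

noncomputable section

/-- A weighted graph: a simple connected finite graph together with a symmetric
nonnegative weight which is positive exactly on edges. -/
structure WeightedGraph (V : Type*) [Fintype V] where
  G : SimpleGraph V
  connected : G.Connected
  w : V → V → ℝ
  symm : ∀ x y, w x y = w y x
  nonneg : ∀ x y, 0 ≤ w x y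
  pos_iff_adj : ∀ x y, 0 < w x y ↔ G.Adj x y

namespace WeightedGraph

variable {V : Type*} [Fintype V]

/-- The weight `μ(x)` of a vertex. -/
def vwt (W : WeightedGraph V) (x : V) : ℝ := ∑ y, W.w x y

/-- The weight `μ(A)` of a set of vertices. -/
def swt (W : WeightedGraph V) (A : Set V) : ℝ :=
  ∑ x ∈ Finset.univ.filter (· ∈ A), W.vwt x

/-- The weighted mean of a function. -/
def mean (W : WeightedGraph V) (φ : V → ℝ) : ℝ :=
  (∑ x, φ x * W.vwt x) / W.swt Set.univ

/-- The `p`-energy of a function. -/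
def energy (W : WeightedGraph V) (p : ℝ) (φ : V → ℝ) : ℝ :=
  ∑ x, ∑ y, |φ y - φ x| ^ p * W.w x y

/-- The `k`-th discrete `p`-Poincaré constant. -/
def nu (W : WeightedGraph V) (k : ℕ) (p : ℝ) : ℝ :=
  sInf {s | ∃ L : Submodule ℝ (V → ℝ), Module.finrank ℝ L = k ∧
    (∀ φ ∈ L, (∃ c : ℝ, ∀ x, φ x = c) → φ = 0) ∧
    s = sSup {r | ∃ φ ∈ L, φ ≠ 0 ∧
      r = W.energy p φ / (2 * ∑ x, |φ x - W.mean φ| ^ p * W.vwt x)}}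

/-- The `k`-th discrete modified `p`-Poincaré constant. -/
def nuHat (W : WeightedGraph V) (k : ℕ) (p : ℝ) : ℝ :=
  sInf {s | ∃ L : Submodule ℝ (V → ℝ), Module.finrank ℝ L = k + 1 ∧
    s = sSup {r | ∃ φ ∈ L, φ ≠ 0 ∧
      r = W.energy p φ / (2 * ∑ x, |φ x| ^ p * W.vwt x)}}

/-- The vertex boundary of a set of vertices. -/
def vbdry (W : WeightedGraph V) (Ω : Set V) : Set V :=
  {x ∈ Ω | ∃ y ∉ Ω, 0 < W.w x y}

/-- The `k`-th discrete Dirichlet `p`-Poincaré constant of `Ω`; functions on `Ω`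
vanishing on the vertex boundary are modelled as functions on `V` vanishing
outside `Ω \ ∂ᵥΩ`. -/
def nuD (W : WeightedGraph V) (Ω : Set V) (k : ℕ) (p : ℝ) : ℝ :=
  sInf {s | ∃ L : Submodule ℝ (V → ℝ), Module.finrank ℝ L = k ∧
    (∀ φ ∈ L, ∀ x, x ∉ Ω \ W.vbdry Ω → φ x = 0) ∧
    s = sSup {r | ∃ φ ∈ L, φ ≠ 0 ∧
      r = (∑ x ∈ Finset.univ.filter (· ∈ Ω), ∑ y ∈ Finset.univ.filter (· ∈ Ω),
            |φ y - φ x| ^ p * W.w x y) /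
          (2 * ∑ x ∈ Finset.univ.filter (· ∈ Ω), |φ x| ^ p * W.vwt x)}}

/-- The closed `r`-neighborhood of a set of vertices w.r.t. the graph distance. -/
def ball (W : WeightedGraph V) (A : Set V) (r : ℝ) : Set V :=
  {x | ∃ a ∈ A, (W.G.dist x a : ℝ) ≤ r}

/-- The graph distance between two sets of vertices. -/
def setDist (W : WeightedGraph V) (A B : Set V) : ℕ :=
  sInf {n : ℕ | ∃ a ∈ A, ∃ b ∈ B, W.G.dist a b = n}

end WeightedGraph


open Finset Function

section DisjointSupport

variable {V ι R : Type*} [Fintype ι] [Ring R] {Ω : ι → Set V}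

lemma sum_smul_apply_of_mem (hΩ : Pairwise (Disjoint on Ω)) {f : ι → V → R}
    (hf : ∀ α, ∀ x ∉ Ω α, f α x = 0) (c : ι → R) {α : ι} {x : V} (hx : x ∈ Ω α) :
    (∑ β, c β • f β) x = c α * f α x := by
  rw [Finset.sum_apply, sum_eq_single α (fun β _ hβα => ?_) (by simp)]
  · rfl
  · simp [hf β x (Set.disjoint_left.1 (hΩ hβα.symm) hx)]

lemma linearIndependent_of_pairwise_disjoint [NoZeroDivisors R] (hΩ : Pairwise (Disjoint on Ω))
    {f : ι → V → R} (hf : ∀ α, ∀ x ∉ Ω α, f α x = 0) (hf0 : ∀ α, f α ≠ 0) :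
    LinearIndependent R f := by
  rw [Fintype.linearIndependent_iff]
  intro c hc α
  obtain ⟨x, hx⟩ := Function.ne_iff.1 (hf0 α)
  have hxΩ : x ∈ Ω α := by_contra fun h => hx (hf α x h)
  have := congrFun hc x
  rw [sum_smul_apply_of_mem hΩ hf c hxΩ] at this
  exact (mul_eq_zero.1 this).resolve_right hx

lemma sum_filter_mem_iUnion [Fintype V] {M : Type*} [AddCommMonoid M]
    (hΩ : Pairwise (Disjoint on Ω)) (g : V → M) :
    ∑ x ∈ univ.filter (· ∈ ⋃ α, Ω α), g x = ∑ α, ∑ x ∈ univ.filter (· ∈ Ω α), g x := by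
  have hU : univ.filter (· ∈ ⋃ α, Ω α) = univ.biUnion fun α => univ.filter (· ∈ Ω α) := by
    ext x
    simp
  rw [hU, sum_biUnion]
  intro α _ β _ hαβ
  simpa [Function.onFun, disjoint_left] using Set.disjoint_left.1 (hΩ hαβ)

end DisjointSupport

namespace WeightedGraph

variable {V : Type*} [Fintype V] (W : WeightedGraph V)

section RayleighQuotient

variable {Ω : Set V} {p : ℝ}

def energyOn (Ω : Set V) (p : ℝ) (φ : V → ℝ) : ℝ :=
  ∑ x ∈ univ.filter (· ∈ Ω), ∑ y ∈ univ.filter (· ∈ Ω), |φ y - φ x| ^ p * W.w x y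

def massOn (Ω : Set V) (p : ℝ) (φ : V → ℝ) : ℝ :=
  2 * ∑ x ∈ univ.filter (· ∈ Ω), |φ x| ^ p * W.vwt x

def rayleigh (Ω : Set V) (p : ℝ) (φ : V → ℝ) : ℝ :=
  W.energyOn Ω p φ / W.massOn Ω p φ

lemma w_le_vwt (x y : V) : W.w x y ≤ W.vwt x :=
  single_le_sum (fun z _ => W.nonneg x z) (mem_univ y)

lemma vwt_nonneg (x : V) : 0 ≤ W.vwt x :=
  (W.nonneg x x).trans (W.w_le_vwt x x)

lemma energyOn_nonneg (φ : V → ℝ) : 0 ≤ W.energyOn Ω p φ :=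
  sum_nonneg fun x _ => sum_nonneg fun y _ => mul_nonneg (by positivity) (W.nonneg x y)

lemma massOn_nonneg (φ : V → ℝ) : 0 ≤ W.massOn Ω p φ :=
  mul_nonneg zero_le_two <| sum_nonneg fun x _ => mul_nonneg (by positivity) (W.vwt_nonneg x)

lemma rayleigh_nonneg (φ : V → ℝ) : 0 ≤ W.rayleigh Ω p φ :=
  div_nonneg (W.energyOn_nonneg φ) (W.massOn_nonneg φ)

lemma energyOn_congr {φ ψ : V → ℝ} (h : ∀ x ∈ Ω, φ x = ψ x) :
    W.energyOn Ω p φ = W.energyOn Ω p ψ := by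
  refine sum_congr rfl fun x hx => sum_congr rfl fun y hy => ?_
  rw [h x (mem_filter.1 hx).2, h y (mem_filter.1 hy).2]

lemma massOn_congr {φ ψ : V → ℝ} (h : ∀ x ∈ Ω, φ x = ψ x) :
    W.massOn Ω p φ = W.massOn Ω p ψ := by
  unfold massOn
  congr 1
  exact sum_congr rfl fun x hx => by rw [h x (mem_filter.1 hx).2]

lemma energyOn_smul (c : ℝ) (φ : V → ℝ) :
    W.energyOn Ω p (c • φ) = |c| ^ p * W.energyOn Ω p φ := by
  simp only [energyOn, mul_sum, Pi.smul_apply, smul_eq_mul, ← mul_sub, abs_mul,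
    Real.mul_rpow (abs_nonneg _) (abs_nonneg _), mul_assoc]

lemma massOn_smul (c : ℝ) (φ : V → ℝ) :
    W.massOn Ω p (c • φ) = |c| ^ p * W.massOn Ω p φ := by
  simp only [massOn, mul_sum, Pi.smul_apply, smul_eq_mul, abs_mul,
    Real.mul_rpow (abs_nonneg _) (abs_nonneg _)]
  exact sum_congr rfl fun x _ => by ring

lemma rayleigh_smul {c : ℝ} (hc : c ≠ 0) (φ : V → ℝ) :
    W.rayleigh Ω p (c • φ) = W.rayleigh Ω p φ := by
  rw [rayleigh, rayleigh, energyOn_smul, massOn_smul,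
    mul_div_mul_left _ _ (Real.rpow_pos_of_pos (abs_pos.2 hc) p).ne']

/-- An edge at a vertex of vanishing `φ`-mass has positive weight at both ends, so both values
of `φ` on it vanish. -/
lemma energyOn_eq_zero_of_massOn_eq_zero (hp : p ≠ 0) {φ : V → ℝ}
    (h : W.massOn Ω p φ = 0) : W.energyOn Ω p φ = 0 := by
  have hterm : ∀ x ∈ univ.filter (· ∈ Ω), |φ x| ^ p * W.vwt x = 0 :=
    (sum_eq_zero_iff_of_nonneg fun x _ => mul_nonneg (by positivity) (W.vwt_nonneg x)).1
      (by simpa [massOn] using h)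
  have hzero : ∀ x ∈ univ.filter (· ∈ Ω), ∀ y, 0 < W.w x y → φ x = 0 := by
    intro x hx y hxy
    have := (mul_eq_zero.1 (hterm x hx)).resolve_right (hxy.trans_le (W.w_le_vwt x y)).ne'
    exact abs_eq_zero.1 ((Real.rpow_eq_zero_iff_of_nonneg (abs_nonneg _)).1 this).1
  refine sum_eq_zero fun x hx => sum_eq_zero fun y hy => ?_
  rcases (W.nonneg x y).eq_or_lt with hxy | hxy
  · rw [← hxy, mul_zero]
  rw [hzero x hx y hxy, hzero y hy x (W.symm y x ▸ hxy), sub_zero, abs_zero,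
    Real.zero_rpow hp, zero_mul]

lemma energyOn_le_mul_massOn (hp : p ≠ 0) {M : ℝ} {φ : V → ℝ}
    (h : W.rayleigh Ω p φ ≤ M) : W.energyOn Ω p φ ≤ M * W.massOn Ω p φ := by
  rcases (W.massOn_nonneg (Ω := Ω) (p := p) φ).eq_or_lt with h0 | h0
  · rw [← h0, W.energyOn_eq_zero_of_massOn_eq_zero hp h0.symm, mul_zero]
  · exact (div_le_iff₀ h0).1 h

end RayleighQuotient

section DisjointUnion

variable {ι : Type*} [Fintype ι] {Ω : ι → Set V} {p : ℝ}

lemma massOn_iUnion (hΩ : Pairwise (Disjoint on Ω)) (φ : V → ℝ) :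
    W.massOn (⋃ α, Ω α) p φ = ∑ α, W.massOn (Ω α) p φ := by
  rw [massOn, sum_filter_mem_iUnion hΩ, mul_sum]
  rfl

/-- An edge between two different pieces leaves each of them, so its endpoints lie on vertex
boundaries. -/
lemma energyOn_iUnion (hp : p ≠ 0) (hΩ : Pairwise (Disjoint on Ω)) {φ : V → ℝ}
    (hφ : ∀ α, ∀ x ∈ W.vbdry (Ω α), φ x = 0) :
    W.energyOn (⋃ α, Ω α) p φ = ∑ α, W.energyOn (Ω α) p φ := by
  have hcross : ∀ α β, α ≠ β → ∀ x ∈ Ω α, ∀ y ∈ Ω β, |φ y - φ x| ^ p * W.w x y = 0 := by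
    intro α β hαβ x hx y hy
    rcases (W.nonneg x y).eq_or_lt with hxy | hxy
    · rw [← hxy, mul_zero]
    have hx0 : φ x = 0 := hφ α x ⟨hx, y, Set.disjoint_right.1 (hΩ hαβ) hy, hxy⟩
    have hy0 : φ y = 0 :=
      hφ β y ⟨hy, x, Set.disjoint_left.1 (hΩ hαβ) hx, W.symm y x ▸ hxy⟩
    rw [hx0, hy0, sub_zero, abs_zero, Real.zero_rpow hp, zero_mul]
  simp only [energyOn, sum_filter_mem_iUnion hΩ]
  refine sum_congr rfl fun α _ => sum_congr rfl fun x hx => ?_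
  refine sum_eq_single α (fun β _ hβα => sum_eq_zero fun y hy => ?_) (by simp)
  exact hcross α β hβα.symm x (mem_filter.1 hx).2 y (mem_filter.1 hy).2

end DisjointUnion

lemma diff_vbdry_mono {A B : Set V} (h : A ⊆ B) : A \ W.vbdry A ⊆ B \ W.vbdry B := by
  rintro x ⟨hxA, hx⟩
  exact ⟨h hxA, fun ⟨_, y, hyB, hxy⟩ => hx ⟨hxA, y, fun hyA => hyB (h hyA), hxy⟩⟩

section PoincareConstant

variable {Ω : Set V} {p : ℝ}

def maxRayleigh (Ω : Set V) (p : ℝ) (L : Submodule ℝ (V → ℝ)) : ℝ :=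
  sSup {r | ∃ φ ∈ L, φ ≠ 0 ∧ r = W.rayleigh Ω p φ}

lemma nuD_eq (Ω : Set V) (k : ℕ) (p : ℝ) :
    W.nuD Ω k p = sInf {s | ∃ L : Submodule ℝ (V → ℝ), Module.finrank ℝ L = k ∧
      (∀ φ ∈ L, ∀ x, x ∉ Ω \ W.vbdry Ω → φ x = 0) ∧ s = W.maxRayleigh Ω p L} :=
  rfl

lemma maxRayleigh_nonneg (L : Submodule ℝ (V → ℝ)) : 0 ≤ W.maxRayleigh Ω p L :=
  Real.sSup_nonneg <| by
    rintro r ⟨φ, -, -, rfl⟩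
    exact W.rayleigh_nonneg φ

lemma maxRayleigh_le {L : Submodule ℝ (V → ℝ)} {M : ℝ} (hM : 0 ≤ M)
    (h : ∀ φ ∈ L, W.rayleigh Ω p φ ≤ M) : W.maxRayleigh Ω p L ≤ M :=
  Real.sSup_le (by rintro r ⟨φ, hφ, -, rfl⟩; exact h φ hφ) hM

lemma exists_maxRayleigh_eq_of_finrank_eq_one {L : Submodule ℝ (V → ℝ)}
    (hL : Module.finrank ℝ L = 1) : ∃ v ∈ L, v ≠ 0 ∧ W.maxRayleigh Ω p L = W.rayleigh Ω p v := by
  obtain ⟨v, hv0, hv⟩ := finrank_eq_one_iff'.1 hL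
  have hv0' : (v : V → ℝ) ≠ 0 := by simpa using hv0
  refine ⟨v, v.2, hv0', ?_⟩
  suffices {r | ∃ φ ∈ L, φ ≠ 0 ∧ r = W.rayleigh Ω p φ} = {W.rayleigh Ω p v} by
    rw [maxRayleigh, this, csSup_singleton]
  ext r
  constructor
  · rintro ⟨φ, hφ, hφ0, rfl⟩
    obtain ⟨c, hc⟩ := hv ⟨φ, hφ⟩
    have hcφ : c • (v : V → ℝ) = φ := congrArg Subtype.val hc
    have hc0 : c ≠ 0 := by rintro rfl; exact hφ0 (by simp [← hcφ])
    rw [Set.mem_singleton_iff, ← hcφ, W.rayleigh_smul hc0]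
  · rintro rfl
    exact ⟨v, v.2, hv0', rfl⟩

lemma nuD_nonneg (k : ℕ) : 0 ≤ W.nuD Ω k p :=
  Real.sInf_nonneg <| by
    rintro s ⟨L, -, -, rfl⟩
    exact W.maxRayleigh_nonneg L

lemma nuD_le_maxRayleigh {k : ℕ} {L : Submodule ℝ (V → ℝ)} (hL : Module.finrank ℝ L = k)
    (hLΩ : ∀ φ ∈ L, ∀ x, x ∉ Ω \ W.vbdry Ω → φ x = 0) :
    W.nuD Ω k p ≤ W.maxRayleigh Ω p L := by
  rw [nuD_eq]
  refine csInf_le ⟨0, ?_⟩ ⟨L, hL, hLΩ, rfl⟩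
  rintro s ⟨L', -, -, rfl⟩
  exact W.maxRayleigh_nonneg L'

lemma exists_rayleigh_lt_of_nuD_one_lt (hΩ : (Ω \ W.vbdry Ω).Nonempty) {t : ℝ}
    (ht : W.nuD Ω 1 p < t) :
    ∃ f : V → ℝ, f ≠ 0 ∧ (∀ x, x ∉ Ω \ W.vbdry Ω → f x = 0) ∧ W.rayleigh Ω p f < t := by
  obtain ⟨x₀, hx₀⟩ := hΩ
  have hδ : (Pi.single x₀ (1 : ℝ) : V → ℝ) ≠ 0 := fun h => by simpa using congrFun h x₀
  rw [nuD_eq] at ht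
  have hδL : ∀ φ ∈ Submodule.span ℝ {(Pi.single x₀ 1 : V → ℝ)}, ∀ x, x ∉ Ω \ W.vbdry Ω →
      φ x = 0 := by
    intro φ hφ x hx
    obtain ⟨c, rfl⟩ := Submodule.mem_span_singleton.1 hφ
    simp [show x ≠ x₀ by rintro rfl; exact hx hx₀]
  obtain ⟨_, ⟨L, hL, hLΩ, rfl⟩, hLt⟩ :=
    exists_lt_of_csInf_lt (by exact ⟨_, _, finrank_span_singleton hδ, hδL, rfl⟩) ht
  obtain ⟨v, hvL, hv0, hv⟩ := W.exists_maxRayleigh_eq_of_finrank_eq_one (Ω := Ω) (p := p) hL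
  exact ⟨v, hv0, hLΩ v hvL, hv ▸ hLt⟩

end PoincareConstant

theorem nuD_iUnion_le {ι : Type*} [Fintype ι] {p : ℝ} (hp : p ≠ 0) {Ω : ι → Set V}
    (hΩ : Pairwise (Disjoint on Ω)) {f : ι → V → ℝ} (hf0 : ∀ α, f α ≠ 0)
    (hf : ∀ α x, x ∉ Ω α \ W.vbdry (Ω α) → f α x = 0) {M : ℝ} (hM : 0 ≤ M)
    (hfM : ∀ α, W.rayleigh (Ω α) p (f α) ≤ M) :
    W.nuD (⋃ α, Ω α) (Fintype.card ι) p ≤ M := by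
  have hfΩ : ∀ α, ∀ x ∉ Ω α, f α x = 0 := fun α x hx => hf α x (hx ·.1)
  refine (W.nuD_le_maxRayleigh (L := Submodule.span ℝ (Set.range f))
    (finrank_span_eq_card (linearIndependent_of_pairwise_disjoint hΩ hfΩ hf0)) ?_).trans
    (W.maxRayleigh_le hM ?_)
  · intro φ hφ x hx
    obtain ⟨c, rfl⟩ := (Submodule.mem_span_range_iff_exists_fun ℝ).1 hφ
    rw [Finset.sum_apply]
    exact sum_eq_zero fun α _ => by
      simp [hf α x fun h => hx (W.diff_vbdry_mono (Set.subset_iUnion Ω α) h)]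
  intro φ hφ
  obtain ⟨c, rfl⟩ := (Submodule.mem_span_range_iff_exists_fun ℝ).1 hφ
  have hφ : ∀ α, ∀ x ∈ Ω α, (∑ β, c β • f β) x = (c α • f α) x :=
    fun α x hx => sum_smul_apply_of_mem hΩ hfΩ c hx
  have hbdry : ∀ α, ∀ x ∈ W.vbdry (Ω α), (∑ β, c β • f β) x = 0 := fun α x hx => by
    rw [hφ α x hx.1, Pi.smul_apply, hf α x fun h => h.2 hx, smul_zero]
  refine div_le_of_le_mul₀ (W.massOn_nonneg _) hM ?_
  calc W.energyOn (⋃ α, Ω α) p (∑ β, c β • f β)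
      = ∑ α, |c α| ^ p * W.energyOn (Ω α) p (f α) := by
        rw [W.energyOn_iUnion hp hΩ hbdry]
        exact sum_congr rfl fun α _ => by rw [W.energyOn_congr (hφ α), energyOn_smul]
    _ ≤ ∑ α, |c α| ^ p * (M * W.massOn (Ω α) p (f α)) :=
        sum_le_sum fun α _ => mul_le_mul_of_nonneg_left
          (W.energyOn_le_mul_massOn hp (hfM α)) (by positivity)
    _ = M * W.massOn (⋃ α, Ω α) p (∑ β, c β • f β) := by
        rw [W.massOn_iUnion hΩ, mul_sum]
        exact sum_congr rfl fun α _ => by rw [W.massOn_congr (hφ α), massOn_smul]; ring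

end WeightedGraph

open WeightedGraph in
/-- Discrete domain decomposing principle (Lemma 8.4): for pairwise disjoint
subsets `Ω_0, …, Ω_k ⊆ V`, each with nonempty interior `Ω_α \ ∂ᵥΩ_α`,
`ν^D_{k+1,p}(⨆ Ω_α, μ) ≤ max_α ν^D_{1,p}(Ω_α, μ)`. -/
theorem nuD_disjUnion_le_max
    {V : Type*} [Fintype V] (W : WeightedGraph V) (p : ℝ) (hp : 1 ≤ p)
    (k : ℕ) (Ω : Fin (k + 1) → Set V)
    (hdisj : ∀ α β, α ≠ β → Disjoint (Ω α) (Ω β))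
    (hint : ∀ α, (Ω α \ W.vbdry (Ω α)).Nonempty) :
    W.nuD (⋃ α, Ω α) (k + 1) p ≤ ⨆ α, W.nuD (Ω α) 1 p := by
  refine le_of_forall_pos_le_add fun ε hε => ?_
  have hlt : ∀ α, W.nuD (Ω α) 1 p < (⨆ β, W.nuD (Ω β) 1 p) + ε := fun α =>
    (le_ciSup (Set.finite_range fun β => W.nuD (Ω β) 1 p).bddAbove α).trans_lt
      (lt_add_of_pos_right _ hε)
  choose f hf0 hf hfε using fun α => W.exists_rayleigh_lt_of_nuD_one_lt (hint α) (hlt α)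
  have hM : 0 ≤ (⨆ β, W.nuD (Ω β) 1 p) + ε :=
    add_nonneg (Real.iSup_nonneg fun β => W.nuD_nonneg 1) hε.le
  simpa using W.nuD_iUnion_le (by positivity) hdisj hf0 hf hM
    fun α => (hfε α).le
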